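/- For a reversible Markov chain with transition matrix P and stationary distribution π on a finite state space, for every state x and every integer m ≥ 1: 4‖p^m(x,·) − π‖_TV² ≤ p^{2m}(x,x)/π(x) − 1. -/

import Mathlib

/-- For a reversible Markov chain with transition matrix `P` and stationary
distribution `π` on a finite state space, for every state `x` and every `m ≥ 1`:
`4‖p^m(x,·) − π‖_TV² ≤ p^{2m}(x,x)/π(x) − 1`. -/
theorem four_tv_sq_le_return_prob
    {V : Type*} [Fintype V] [DecidableEq V] [Nonempty V]
    (P : Matrix V V ℝ) (π : V → ℝ)
    (hnn : ∀ x y, 0 ≤ P x y) (hrow : ∀ x, ∑ y, P x y = 1)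
    (hπpos : ∀ x, 0 < π x) (hπsum : ∑ x, π x = 1)
    (hrev : ∀ x y, π x * P x y = π y * P y x) :
    ∀ (m : ℕ), 1 ≤ m → ∀ x : V,
      4 * ((1 / 2) * ∑ y, |(P ^ m) x y - π y|) ^ 2 ≤ (P ^ (2 * m)) x x / π x - 1 := by
  have hrevn : ∀ n : ℕ, ∀ a b : V, π a * (P ^ n) a b = π b * (P ^ n) b a := by
    intro n
    induction n with
    | zero =>
      intro a b
      by_cases h : a = b <;> simp [Matrix.one_apply, h, eq_comm]
    | succ n ih =>
      intro a b
      have L : (P ^ (n+1)) a b = ∑ z, (P ^ n) a z * P z b := by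
        rw [pow_succ, Matrix.mul_apply]
      have R : (P ^ (n+1)) b a = ∑ z, P b z * (P ^ n) z a := by
        rw [pow_succ', Matrix.mul_apply]
      rw [L, R, Finset.mul_sum, Finset.mul_sum]
      apply Finset.sum_congr rfl
      intro z _
      calc π a * ((P ^ n) a z * P z b) = (π a * (P ^ n) a z) * P z b := by ring
        _ = (π z * (P ^ n) z a) * P z b := by rw [ih a z]
        _ = (π z * P z b) * (P ^ n) z a := by ring
        _ = (π b * P b z) * (P ^ n) z a := by rw [hrev z b]
        _ = π b * (P b z * (P ^ n) z a) := by ring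
  have hrown : ∀ n : ℕ, ∀ a : V, ∑ y, (P ^ n) a y = 1 := by
    intro n
    induction n with
    | zero => intro a; simp [Matrix.one_apply]
    | succ n ih =>
      intro a
      rw [pow_succ']
      simp only [Matrix.mul_apply]
      rw [Finset.sum_comm]
      calc ∑ z, ∑ y, P a z * (P ^ n) z y = ∑ z, P a z * ∑ y, (P ^ n) z y :=
            Finset.sum_congr rfl fun z _ => (Finset.mul_sum _ _ _).symm
        _ = 1 := by simp [ih, hrow]
  intro m hm x
  have hπne : ∀ y : V, π y ≠ 0 := fun y => (hπpos y).ne'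
  -- key identity
  have key : (P ^ (2 * m)) x x = π x * ∑ y, ((P ^ m) x y) ^ 2 / π y := by
    have h2m : (2 : ℕ) * m = m + m := by ring
    rw [h2m, pow_add, Matrix.mul_apply, Finset.mul_sum]
    apply Finset.sum_congr rfl
    intro y _
    have h1 : (P ^ m) y x = π x * (P ^ m) x y / π y := by
      rw [eq_div_iff (hπne y)]
      linarith [hrevn m x y]
    rw [h1]
    field_simp [hπne y]
  set a : V → ℝ := fun y => (P ^ m) x y - π y with ha
  -- Cauchy–Schwarz
  have hcs : (∑ y, |a y|) ^ 2 ≤ ∑ y, (a y) ^ 2 / π y := by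
    have h2 := Finset.sum_mul_sq_le_sq_mul_sq Finset.univ
      (fun y => |a y| / Real.sqrt (π y)) (fun y => Real.sqrt (π y))
    have hfg : ∀ y : V, |a y| / Real.sqrt (π y) * Real.sqrt (π y) = |a y| := by
      intro y
      have : Real.sqrt (π y) ≠ 0 := ne_of_gt (Real.sqrt_pos.mpr (hπpos y))
      field_simp
    have hf2 : ∀ y : V, (|a y| / Real.sqrt (π y)) ^ 2 = (a y) ^ 2 / π y := by
      intro y
      rw [div_pow, sq_abs, Real.sq_sqrt (hπpos y).le]
    have hg2 : ∀ y : V, (Real.sqrt (π y)) ^ 2 = π y := fun y => Real.sq_sqrt (hπpos y).le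
    simp only [hfg, hf2, hg2] at h2
    rw [hπsum, mul_one] at h2
    exact h2
  -- compute the chi-square sum
  have hsum : ∑ y, (a y) ^ 2 / π y = (P ^ (2 * m)) x x / π x - 1 := by
    have : ∀ y : V, (a y) ^ 2 / π y = ((P ^ m) x y) ^ 2 / π y - 2 * (P ^ m) x y + π y := by
      intro y
      have h := hπne y
      field_simp [ha]
      ring
    rw [Finset.sum_congr rfl (fun y _ => this y)]
    rw [Finset.sum_add_distrib, Finset.sum_sub_distrib, ← Finset.mul_sum, hrown m x, hπsum, key]
    rw [mul_comm (π x), mul_div_assoc, div_self (hπne x), mul_one]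
    ring
  calc 4 * ((1 / 2) * ∑ y, |a y|) ^ 2 = (∑ y, |a y|) ^ 2 := by ring
    _ ≤ ∑ y, (a y) ^ 2 / π y := hcs
    _ = (P ^ (2 * m)) x x / π x - 1 := hsum
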